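/- (Von Neumann mean ergodic theorem) Let U be a unitary operator on a Hilbert space H and let P be the orthogonal projection onto the subspace of U-invariant vectors {φ : Uφ = φ}. Then for every φ ∈ H, the Cesàro averages (1/N)∑_{k=0}^{N−1} U^k φ converge in norm to Pφ as N → ∞. -/

import Mathlib

open Filter

/-
A unitary is a contraction, so the mean ergodic theorem for contractions
(`ContinuousLinearMap.tendsto_birkhoffAverage_orthogonalProjection`) applies to `U`: its Birkhoff
averages are the Cesàro averages, and the two conditions on `P` characterize the orthogonal
projection onto the fixed subspace.
-/

namespace ContinuousLinearMap

theorem birkhoffAverage_id {R M : Type*} [DivisionSemiring R] [AddCommMonoid M] [Module R M]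
    [TopologicalSpace M] (f : M →L[R] M) (N : ℕ) (x : M) :
    birkhoffAverage R f id N x = (N : R)⁻¹ • ∑ k ∈ Finset.range N, (f ^ k) x := by
  simp only [birkhoffAverage, birkhoffSum, id_eq, pow_apply_eq_iterate]

theorem opNorm_le_one_of_mem_unitary {𝕜 H : Type*} [RCLike 𝕜] [NormedAddCommGroup H]
    [InnerProductSpace 𝕜 H] [CompleteSpace H] {U : H →L[𝕜] H} (hU : U ∈ unitary (H →L[𝕜] H)) :
    ‖U‖ ≤ 1 :=
  U.opNorm_le_bound zero_le_one fun x => by rw [norm_map_of_mem_unitary hU, one_mul]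

end ContinuousLinearMap

/-- **Von Neumann mean ergodic theorem.** Let `U` be a unitary operator on a complex
Hilbert space `H` and `P` the orthogonal projection onto the subspace of `U`-invariant
vectors (characterized by: `P` maps into the fixed subspace and `φ - Pφ` is orthogonal
to every fixed vector). Then for every `φ ∈ H` the Cesàro averages
`(1/N) ∑_{k<N} U^k φ` converge in norm to `P φ`. -/
theorem von_neumann_mean_ergodic
    {H : Type*} [NormedAddCommGroup H] [InnerProductSpace ℂ H] [CompleteSpace H]
    (U : H →L[ℂ] H) (hU : U ∈ unitary (H →L[ℂ] H))
    (P : H →L[ℂ] H)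
    (hPfix : ∀ φ : H, U (P φ) = P φ)
    (hPorth : ∀ φ ψ : H, U ψ = ψ → inner (𝕜 := ℂ) (φ - P φ) ψ = 0)
    (φ : H) :
    Tendsto (fun N : ℕ => (N : ℂ)⁻¹ • ∑ k ∈ Finset.range N, (U ^ k) φ)
      atTop (nhds (P φ)) := by
  have hP : (U.eqLocus (1 : H →L[ℂ] H)).starProjection φ = P φ :=
    Submodule.eq_starProjection_of_mem_of_inner_eq_zero (hPfix φ) fun ψ hψ => hPorth φ ψ hψ
  simpa only [← U.birkhoffAverage_id, ← Submodule.starProjection_apply, hP] using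
    U.tendsto_birkhoffAverage_orthogonalProjection (U.opNorm_le_one_of_mem_unitary hU) φ
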